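/- Let G be a topological space, H ⊆ G a subset, and (u_n)_{n ∈ ℕ} a sequence of continuous functions u_n : G → ℂ such that |u_n(t)| ≤ 1 for all t ∈ G, u_n(h) = 1 for all h ∈ H, and for every s ∈ G \ H there exists n with u_n(s) ≠ 1. Then u(t) = ∑_{n ∈ ℕ} 2^{-(n+1)} · u_n(t) defines a continuous function u : G → ℂ with |u(t)| ≤ 1 for all t ∈ G and {t ∈ G : u(t) = 1} = H. -/

import Mathlib

/-! Writing `w n = 2^{-(n+1)}`, the weights are positive with `∑ w n = 1`, so `u t` is a convex
combination of points of the closed unit disc; since `1` is an extreme point of the disc, the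
combination equals `1` exactly when every `u n t` does. Comparing real parts, this comes down to
`∑ w n (1 - re (u n t)) = 0` forcing each nonnegative term to vanish. -/

namespace Complex

lemma eq_one_of_norm_le_one_of_re_eq_one {z : ℂ} (hz : ‖z‖ ≤ 1) (hre : z.re = 1) : z = 1 := by
  have him : z.im = 0 :=
    abs_re_eq_norm.mp (le_antisymm (abs_re_le_norm z) (by rwa [hre, abs_one]))
  exact Complex.ext hre him

section ConvexCombination

variable {ι : Type*} {w : ι → ℝ} {z : ι → ℂ}

lemma norm_ofReal_mul_le_of_norm_le_one (hw : ∀ i, 0 ≤ w i) (hz : ∀ i, ‖z i‖ ≤ 1) (i : ι) :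
    ‖(w i : ℂ) * z i‖ ≤ w i := by
  rw [norm_mul, norm_real, Real.norm_of_nonneg (hw i)]
  exact mul_le_of_le_one_right (hw i) (hz i)

lemma norm_tsum_ofReal_mul_le_one (hw : ∀ i, 0 ≤ w i) (hw_sum : HasSum w 1)
    (hz : ∀ i, ‖z i‖ ≤ 1) : ‖∑' i, (w i : ℂ) * z i‖ ≤ 1 :=
  tsum_of_norm_bounded hw_sum (norm_ofReal_mul_le_of_norm_le_one hw hz)

theorem tsum_ofReal_mul_eq_one_iff (hw : ∀ i, 0 < w i) (hw_sum : HasSum w 1)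
    (hz : ∀ i, ‖z i‖ ≤ 1) : ∑' i, (w i : ℂ) * z i = 1 ↔ ∀ i, z i = 1 := by
  constructor
  · intro h i
    have hsum : HasSum (fun i ↦ (w i : ℂ) * z i) 1 :=
      h ▸ (Summable.of_norm_bounded hw_sum.summable
        (norm_ofReal_mul_le_of_norm_le_one (fun i ↦ (hw i).le) hz)).hasSum
    have hdefect : HasSum (fun i ↦ w i * (1 - (z i).re)) 0 := by
      have hre := hasSum_re hsum
      simp only [re_ofReal_mul, one_re] at hre
      simpa [mul_sub] using hw_sum.sub hre
    have hnonneg : ∀ i, 0 ≤ w i * (1 - (z i).re) := fun i ↦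
      mul_nonneg (hw i).le (sub_nonneg.mpr ((re_le_norm (z i)).trans (hz i)))
    have hi := congr_fun ((hasSum_zero_iff_of_nonneg hnonneg).mp hdefect) i
    have hre : (z i).re = 1 :=
      (sub_eq_zero.mp ((mul_eq_zero.mp hi).resolve_left (hw i).ne')).symm
    exact eq_one_of_norm_le_one_of_re_eq_one (hz i) hre
  · intro h
    simp only [h, mul_one, ← ofReal_tsum, hw_sum.tsum_eq, ofReal_one]

end ConvexCombination

end Complex

lemma hasSum_half_pow_succ : HasSum (fun n : ℕ ↦ (1 / 2 : ℝ) ^ (n + 1)) 1 := by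
  simpa [pow_succ'] using hasSum_geometric_two.mul_left (1 / 2 : ℝ)

/-- Given continuous functions `u n : G → ℂ` with `|u n| ≤ 1`, each equal to `1` on `H`,
and such that every point outside `H` is separated by some `u n` (i.e. `u n s ≠ 1`), the
function `u t = ∑' n, 2^{-(n+1)} * u n t` is continuous, satisfies `|u| ≤ 1`, and its
level set `{t : u t = 1}` is exactly `H`. -/
theorem series_of_separating_functions
    {G : Type*} [TopologicalSpace G] (H : Set G)
    (u : ℕ → G → ℂ)
    (hc : ∀ n : ℕ, Continuous (u n))
    (hb : ∀ (n : ℕ) (t : G), ‖u n t‖ ≤ 1)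
    (hone : ∀ (n : ℕ), ∀ h ∈ H, u n h = 1)
    (hsep : ∀ s ∉ H, ∃ n : ℕ, u n s ≠ 1) :
    Continuous (fun t : G => ∑' n : ℕ, (1 / 2 : ℂ) ^ (n + 1) * u n t) ∧
      (∀ t : G, ‖∑' n : ℕ, (1 / 2 : ℂ) ^ (n + 1) * u n t‖ ≤ 1) ∧
      {t : G | (∑' n : ℕ, (1 / 2 : ℂ) ^ (n + 1) * u n t) = 1} = H := by
  have hw_pos : ∀ n : ℕ, 0 < (1 / 2 : ℝ) ^ (n + 1) := fun n ↦ by positivity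
  have hw_nonneg : ∀ n : ℕ, 0 ≤ (1 / 2 : ℝ) ^ (n + 1) := fun n ↦ (hw_pos n).le
  have hw_cast : ∀ n : ℕ, (1 / 2 : ℂ) ^ (n + 1) = (((1 / 2 : ℝ) ^ (n + 1) : ℝ) : ℂ) := by
    intro n; push_cast; rfl
  simp only [hw_cast]
  refine ⟨?_, fun t ↦ ?_, ?_⟩
  · exact continuous_tsum (fun n ↦ continuous_const.mul (hc n)) hasSum_half_pow_succ.summable
      fun n t ↦ Complex.norm_ofReal_mul_le_of_norm_le_one hw_nonneg (fun n ↦ hb n t) n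
  · exact Complex.norm_tsum_ofReal_mul_le_one hw_nonneg hasSum_half_pow_succ (hb · t)
  · ext t
    rw [Set.mem_ofPred_eq,
      Complex.tsum_ofReal_mul_eq_one_iff hw_pos hasSum_half_pow_succ (hb · t)]
    refine ⟨fun ht ↦ ?_, fun ht n ↦ hone n t ht⟩
    by_contra htH
    obtain ⟨n, hn⟩ := hsep t htH
    exact hn (ht n)
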